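/- Let n ≥ 1. The third moment of the real equatorial stabilizer ensemble satisfies (1/|ℬₙ|) Σ_{A ∈ ℬₙ} (φ^{req}_A (φ^{req}_A)†)^{⊗3} = (1/8ⁿ) Σ_{(x,y,z,w,s,t) ∈ 𝒦₁} |x y z⟩⟨w s t|, where 𝒦₁ is the set of 6-tuples (x,y,z,w,s,t) of bit strings in {0,1}ⁿ for which there exists a partition of {1,…,6} into three pairs {(i₁,j₁),(i₂,j₂),(i₃,j₃)} with v_{i_k} = v_{j_k} for k = 1,2,3, writing (v₁,…,v₆) = (x,y,z,w,s,t). -/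

import Mathlib

open Finset Matrix

/-- Bit strings of length `n`, with entries viewed as `0/1` integers via `Fin 2`. -/
abbrev Bits (n : ℕ) := Fin n → Fin 2

/-- The index set `ℬₙ`: upper-triangular `n × n` matrices with entries in `{0,1}`
(`a_{ij} = 0` for `i > j`). -/
def Bn (n : ℕ) : Finset (Matrix (Fin n) (Fin n) (Fin 2)) :=
  @Finset.filter _ (fun A => ∀ i j : Fin n, j < i → A i j = 0)
    (fun _ => @Fintype.decidableForallFintype _ _
      (fun _ => Fintype.decidableForallFintype) _) Finset.univ

/-- The quadratic form `xᵀ A x` (its parity is what matters). -/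
def quadB {n : ℕ} (A : Matrix (Fin n) (Fin n) (Fin 2)) (x : Bits n) : ℕ :=
  ∑ i, ∑ j, (A i j : ℕ) * (x i : ℕ) * (x j : ℕ)

/-- The real equatorial stabilizer state `φ^{req}_A`. -/
noncomputable def phiReq {n : ℕ} (A : Matrix (Fin n) (Fin n) (Fin 2)) (x : Bits n) : ℂ :=
  (-1 : ℂ) ^ quadB A x / (Real.sqrt (2 ^ n) : ℂ)

/-- The rank-one projector `φ φ†` onto a vector `φ`. -/
noncomputable def outer {ι : Type*} (φ : ι → ℂ) : Matrix ι ι ℂ :=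
  Matrix.of fun x y => φ x * (starRingEnd ℂ) (φ y)

/-- The Kronecker (tensor) cube of a matrix, indexed by triples. -/
def kron3 {ι : Type*} (M : Matrix ι ι ℂ) : Matrix (ι × ι × ι) (ι × ι × ι) ℂ :=
  Matrix.of fun p q => M p.1 q.1 * M p.2.1 q.2.1 * M p.2.2 q.2.2

/-- A 6-tuple `v` is "paired" if `{1,…,6}` partitions into three pairs on which `v`
agrees; equivalently there is a fixed-point-free involution `σ` of `Fin 6` with `v ∘ σ = v`. -/
def Paired {α : Type*} (v : Fin 6 → α) : Prop :=
  ∃ σ : Equiv.Perm (Fin 6), (∀ k, σ k ≠ k) ∧ (∀ k, σ (σ k) = k) ∧ (∀ k, v (σ k) = v k)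

instance {α : Type*} [DecidableEq α] (v : Fin 6 → α) : Decidable (Paired v) := by
  unfold Paired; infer_instance

/-!
The `((x, y, z), (w, s, t))` entry of the averaged third moment is `8⁻ⁿ` times the average over
`A ∈ ℬₙ` of `(-1)^(Σₖ vₖᵀ A vₖ)`, where `v = (x, y, z, w, s, t)`. Modulo 2 the exponent is
`Σ_{i,j} A_ij M_ij` with `M = Σₖ vₖ vₖᵀ` symmetric, so this is a character sum over the upper
triangular matrices: it is `1` if `M ≡ 0 (mod 2)` and `0` otherwise.

It remains to see that `M ≡ 0` exactly when the six vectors pair up. Pairs cancel in characteristic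
2. Conversely, `M ≡ 0` means `Σₖ ℓ₁(vₖ) ℓ₂(vₖ) = 0` for all affine functions `ℓ₁, ℓ₂` on `𝔽₂ⁿ`. If
some value `u₀` occurred an odd number of times, the at most five other points could be split
among the zero sets of two affine functions that are both `1` at `u₀` (an affine function vanishes
on three points and not on `u₀` as soon as `u₀` is not their sum), and the sum would be the
multiplicity of `u₀`, which is odd.
-/

lemma exists_involutive_fixedPointFree_of_even_card {β : Type*} [Fintype β]
    (h : Even (Fintype.card β)) : ∃ τ : Equiv.Perm β, Function.Involutive τ ∧ ∀ b, τ b ≠ b := by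
  obtain ⟨m, hm⟩ := h
  let e : β ≃ Bool × Fin m := Fintype.equivOfCardEq (by simp [hm]; ring)
  refine ⟨e.symm.permCongr (Equiv.prodCongr Equiv.boolNot (Equiv.refl _)), fun b => ?_, fun b => ?_⟩
  · simp [Equiv.permCongr_apply, Prod.map]
  · simp [Equiv.permCongr_apply, Equiv.symm_apply_eq, Prod.ext_iff]

lemma exists_involution_preserving_of_even_card_fiber {ι α : Type*} [Fintype ι] [DecidableEq α]
    (v : ι → α) (h : ∀ a, Even #{k | v k = a}) :
    ∃ σ : Equiv.Perm ι, (∀ k, σ k ≠ k) ∧ (∀ k, σ (σ k) = k) ∧ ∀ k, v (σ k) = v k := by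
  choose τ hτ using fun a => exists_involutive_fixedPointFree_of_even_card
    (β := {k // v k = a}) (by rw [Fintype.card_subtype]; exact h a)
  let e := Equiv.sigmaFiberEquiv v
  refine ⟨e.permCongr (Equiv.sigmaCongrRight τ), fun k => ?_, fun k => ?_, fun k => ?_⟩ <;>
    obtain ⟨⟨a, x⟩, rfl⟩ := e.surjective k
  · simpa [Equiv.permCongr_apply] using (hτ a).2 x
  · simp [Equiv.permCongr_apply, (hτ a).1 x]
  · simp only [Equiv.permCongr_apply, Equiv.symm_apply_apply, Equiv.sigmaCongrRight_apply]
    exact (τ a x).2.trans x.2.symm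

theorem Paired.sum_eq_zero {α : Type*} {v : Fin 6 → α} (hv : Paired v) (f : α → ZMod 2) :
    ∑ k, f (v k) = 0 := by
  obtain ⟨σ, hne, hinv, hσ⟩ := hv
  exact Finset.sum_ninvolution σ (fun k => by rw [hσ, CharTwo.add_self_eq_zero])
    (fun k _ => hne k) (fun _ => mem_univ _) hinv

theorem Paired.comp_iff {α β : Type*} {e : α → β} (he : Function.Injective e) (v : Fin 6 → α) :
    Paired (e ∘ v) ↔ Paired v := by
  simp [Paired, he.eq_iff]

lemma zmod_two_eq_one_of_ne_zero {x : ZMod 2} (hx : x ≠ 0) : x = 1 := by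
  revert x; decide

section ZModTwoModule

variable {V : Type*} [AddCommGroup V] [Module (ZMod 2) V]

lemma exists_dual_eq_one_of_add_add_ne_zero {a b c : V} (ha : a ≠ 0) (hb : b ≠ 0) (hc : c ≠ 0)
    (habc : a + b + c ≠ 0) : ∃ f : Module.Dual (ZMod 2) V, f a = 1 ∧ f b = 1 ∧ f c = 1 := by
  -- over `𝔽₂`, `span {a + b, a + c} = {0, a + b, a + c, b + c}`
  have ha' : a ∉ Submodule.span (ZMod 2) {a + b, a + c} := by
    rw [Submodule.mem_span_pair]
    rintro ⟨s, t, hst⟩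
    have h01 : ∀ r : ZMod 2, r = 0 ∨ r = 1 := by decide
    rcases h01 s with rfl | rfl <;> rcases h01 t with rfl | rfl <;>
      simp only [zero_smul, one_smul, zero_add, add_zero] at hst
    · exact ha hst.symm
    · exact hc (add_eq_left.1 hst)
    · exact hb (add_eq_left.1 hst)
    · rw [add_comm a b, ZModModule.add_add_add_cancel] at hst
      exact habc (by rw [add_assoc, hst, ZModModule.add_self])
  obtain ⟨f, hfa, hf⟩ := Submodule.exists_dual_map_eq_bot_of_notMem ha' inferInstance
  have hf0 : ∀ x ∈ Submodule.span (ZMod 2) {a + b, a + c}, f x = 0 := fun x hx =>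
    (Submodule.mem_bot _).1 (hf ▸ Submodule.mem_map_of_mem hx)
  have hfb : f a = f b :=
    CharTwo.add_eq_zero.1 (map_add f a b ▸ hf0 _ (Submodule.subset_span (by simp)))
  have hfc : f a = f c :=
    CharTwo.add_eq_zero.1 (map_add f a c ▸ hf0 _ (Submodule.subset_span (by simp)))
  have hfa' := zmod_two_eq_one_of_ne_zero hfa
  exact ⟨f, hfa', hfb ▸ hfa', hfc ▸ hfa'⟩

lemma exists_dual_eq_one_of_ne_zero {a b : V} (ha : a ≠ 0) (hb : b ≠ 0) :
    ∃ f : Module.Dual (ZMod 2) V, f a = 1 ∧ f b = 1 := by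
  obtain ⟨f, hfa, hfb, -⟩ := exists_dual_eq_one_of_add_add_ne_zero ha hb hb
    (by rwa [add_assoc, ZModModule.add_self, add_zero])
  exact ⟨f, hfa, hfb⟩

lemma exists_dual_cover_of_ne_zero (r : Fin 5 → V) (hr : ∀ i, r i ≠ 0) :
    ∃ f g : Module.Dual (ZMod 2) V, ∀ i, f (r i) = 1 ∨ g (r i) = 1 := by
  by_cases h012 : r 0 + r 1 + r 2 = 0
  · by_cases h013 : r 0 + r 1 + r 3 = 0
    · have h23 : r 2 = r 3 := add_left_cancel (h012.trans h013.symm)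
      obtain ⟨f, hf0, hf1⟩ := exists_dual_eq_one_of_ne_zero (hr 0) (hr 1)
      obtain ⟨g, hg2, hg4⟩ := exists_dual_eq_one_of_ne_zero (hr 2) (hr 4)
      refine ⟨f, g, fun i => ?_⟩
      fin_cases i <;> simp [hf0, hf1, hg2, hg4, ← h23]
    · obtain ⟨f, hf0, hf1, hf3⟩ :=
        exists_dual_eq_one_of_add_add_ne_zero (hr 0) (hr 1) (hr 3) h013
      obtain ⟨g, hg2, hg4⟩ := exists_dual_eq_one_of_ne_zero (hr 2) (hr 4)
      refine ⟨f, g, fun i => ?_⟩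
      fin_cases i <;> simp [hf0, hf1, hf3, hg2, hg4]
  · obtain ⟨f, hf0, hf1, hf2⟩ :=
      exists_dual_eq_one_of_add_add_ne_zero (hr 0) (hr 1) (hr 2) h012
    obtain ⟨g, hg3, hg4⟩ := exists_dual_eq_one_of_ne_zero (hr 3) (hr 4)
    refine ⟨f, g, fun i => ?_⟩
    fin_cases i <;> simp [hf0, hf1, hf2, hg3, hg4]

lemma exists_dual_cover (r : Fin 5 → V) :
    ∃ f g : Module.Dual (ZMod 2) V, ∀ i, r i ≠ 0 → f (r i) = 1 ∨ g (r i) = 1 := by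
  classical
  by_cases h : ∃ j, r j ≠ 0
  · obtain ⟨j, hj⟩ := h
    obtain ⟨f, g, hfg⟩ := exists_dual_cover_of_ne_zero (fun i => if r i = 0 then r j else r i)
      (fun i => by split_ifs <;> assumption)
    exact ⟨f, g, fun i hi => by simpa [hi] using hfg i⟩
  · push Not at h
    exact ⟨0, 0, fun i hi => absurd (h i) hi⟩

lemma sum_affine_mul_affine_eq_zero {v : Fin 6 → V}
    (h : ∀ f g : Module.Dual (ZMod 2) V, ∑ k, f (v k) * g (v k) = 0)
    (f g : Module.Dual (ZMod 2) V) (a b : ZMod 2) :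
    ∑ k, (a + f (v k)) * (b + g (v k)) = 0 := by
  have hlin : ∀ f : Module.Dual (ZMod 2) V, ∑ k, f (v k) = 0 := fun f => by
    have hidem : ∀ x : ZMod 2, x * x = x := by decide
    simpa [hidem] using h f f
  have hsix : ∀ x : ZMod 2, 6 * x = 0 := by decide
  simp [mul_add, add_mul, sum_add_distrib, ← mul_sum, ← sum_mul, h f g, hlin, hsix]

theorem even_card_fiber_of_sum_dual_mul_eq_zero [DecidableEq V] {v : Fin 6 → V}
    (h : ∀ f g : Module.Dual (ZMod 2) V, ∑ k, f (v k) * g (v k) = 0) (k₀ : Fin 6) :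
    Even #{k | v k = v k₀} := by
  obtain ⟨f, g, hfg⟩ := exists_dual_cover fun i => v (k₀.succAbove i) - v k₀
  have hterm : ∀ k, (1 + f (v k - v k₀)) * (1 + g (v k - v k₀)) = if v k = v k₀ then 1 else 0 := by
    intro k
    split_ifs with hk
    · simp [hk]
    · obtain ⟨i, rfl⟩ := Fin.exists_succAbove_eq (fun h => hk (h ▸ rfl) : k ≠ k₀)
      rcases hfg i (sub_ne_zero.2 hk) with h1 | h1 <;> simp [h1, CharTwo.add_self_eq_zero]
  rw [← ZMod.natCast_eq_zero_iff_even, ← Finset.sum_boole]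
  calc ∑ k, (if v k = v k₀ then (1 : ZMod 2) else 0)
      = ∑ k, ((1 - f (v k₀)) + f (v k)) * ((1 - g (v k₀)) + g (v k)) := by
        refine sum_congr rfl fun k _ => ?_
        rw [← hterm, map_sub, map_sub]; ring
    _ = 0 := sum_affine_mul_affine_eq_zero h f g _ _

theorem paired_iff_sum_dual_mul_eq_zero (v : Fin 6 → V) :
    Paired v ↔ ∀ f g : Module.Dual (ZMod 2) V, ∑ k, f (v k) * g (v k) = 0 := by
  classical
  refine ⟨fun hv f g => hv.sum_eq_zero fun x => f x * g x, fun h => ?_⟩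
  refine exists_involution_preserving_of_even_card_fiber v fun a => ?_
  by_cases ha : ∃ k, v k = a
  · obtain ⟨k, rfl⟩ := ha
    exact even_card_fiber_of_sum_dual_mul_eq_zero h k
  · simp [filter_false_of_mem fun k _ => not_exists.1 ha k]

end ZModTwoModule

def bitsToZMod {n : ℕ} (x : Bits n) : Fin n → ZMod 2 := fun i => ((x i : ℕ) : ZMod 2)

lemma bitsToZMod_injective {n : ℕ} : Function.Injective (bitsToZMod (n := n)) := by
  have hcast : ∀ a b : Fin 2, ((a : ℕ) : ZMod 2) = (b : ℕ) → a = b := by decide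
  exact fun x y h => funext fun i => hcast _ _ (congrFun h i)

lemma sum_dual_mul_dual_eq_zero {ι K : Type*} [Fintype ι] [CommRing K] {n : ℕ}
    {w : ι → Fin n → K} (h : ∀ i j, ∑ k, w k i * w k j = 0)
    (f g : Module.Dual K (Fin n → K)) : ∑ k, f (w k) * g (w k) = 0 := by
  classical
  have hcoord : ∀ k, f (w k) * g (w k) = ∑ i, ∑ j, f (fun l => if i = l then 1 else 0) *
      g (fun l => if j = l then 1 else 0) * (w k i * w k j) := fun k => by
    rw [LinearMap.pi_apply_eq_sum_univ f (w k), LinearMap.pi_apply_eq_sum_univ g (w k), sum_mul_sum]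
    simp only [smul_eq_mul]
    exact sum_congr rfl fun i _ => sum_congr rfl fun j _ => by ring
  rw [sum_congr rfl fun k _ => hcoord k, sum_comm]
  refine sum_eq_zero fun i _ => ?_
  rw [sum_comm]
  refine sum_eq_zero fun j _ => ?_
  rw [← mul_sum, h, mul_zero]

lemma paired_iff_sum_mul_eq_zero {n : ℕ} (v : Fin 6 → Bits n) :
    Paired v ↔ ∀ i j, ∑ k, bitsToZMod (v k) i * bitsToZMod (v k) j = 0 := by
  rw [← Paired.comp_iff bitsToZMod_injective, paired_iff_sum_dual_mul_eq_zero]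
  exact ⟨fun h i j => h (LinearMap.proj i) (LinearMap.proj j), sum_dual_mul_dual_eq_zero⟩

lemma neg_one_pow_eq_of_natCast_eq {R : Type*} [Ring R] {m m' : ℕ}
    (h : (m : ZMod 2) = m') : (-1 : R) ^ m = (-1) ^ m' := by
  rw [neg_one_pow_eq_pow_mod_two, (ZMod.natCast_eq_natCast_iff' m m' 2).1 h,
    ← neg_one_pow_eq_pow_mod_two]

lemma sum_Bn_neg_one_pow_eq_zero {n : ℕ} {E : Matrix (Fin n) (Fin n) (Fin 2) → ℕ}
    {c : Fin n → Fin n → ZMod 2} (hE : ∀ A, (E A : ZMod 2) = ∑ i, ∑ j, ((A i j : ℕ) : ZMod 2) * c i j)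
    {i₀ j₀ : Fin n} (hij : i₀ ≤ j₀) (hc : c i₀ j₀ = 1) :
    ∑ A ∈ Bn n, (-1 : ℂ) ^ E A = 0 := by
  let s : Matrix (Fin n) (Fin n) (Fin 2) := Matrix.single i₀ j₀ 1
  have hcast : ∀ a b : Fin 2, (((a + b : Fin 2) : ℕ) : ZMod 2) = (a : ℕ) + (b : ℕ) := by decide
  have hflip : ∀ A, (E (A + s) : ZMod 2) = ((E A + 1 : ℕ) : ZMod 2) := fun A => by
    simp [hE, s, hcast, add_mul, sum_add_distrib, Matrix.single_apply, apply_ite Fin.val, ite_and, hc]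
  refine sum_involution (fun A _ => A + s) (fun A _ => ?_) (fun A _ _ => ?_) (fun A hA => ?_)
    (fun A _ => ?_)
  · rw [neg_one_pow_eq_of_natCast_eq (hflip A), pow_succ]; ring
  · exact fun h => by simpa [s] using congrFun (congrFun h i₀) j₀
  · simp only [Bn, mem_filter, mem_univ, true_and] at hA ⊢
    intro i j hji
    rw [Matrix.add_apply, hA i j hji, zero_add]
    simp only [s, Matrix.single_apply, ite_eq_right_iff]
    rintro ⟨rfl, rfl⟩
    exact absurd hij (not_le.2 hji)
  · have h2 : ∀ a b : Fin 2, a + b + b = a := by decide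
    exact Matrix.ext fun i j => h2 (A i j) (s i j)

lemma natCast_sum_quadB {ι : Type*} [Fintype ι] {n : ℕ} (A : Matrix (Fin n) (Fin n) (Fin 2))
    (v : ι → Bits n) :
    ((∑ k, quadB A (v k) : ℕ) : ZMod 2) =
      ∑ i, ∑ j, ((A i j : ℕ) : ZMod 2) * ∑ k, bitsToZMod (v k) i * bitsToZMod (v k) j := by
  simp only [quadB, bitsToZMod, Nat.cast_sum, Nat.cast_mul, mul_sum]
  rw [sum_comm]
  refine sum_congr rfl fun i _ => ?_
  rw [sum_comm]
  refine sum_congr rfl fun j _ => sum_congr rfl fun k _ => by ring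

lemma sum_Bn_neg_one_pow_sum_quadB {n : ℕ} (v : Fin 6 → Bits n) :
    ∑ A ∈ Bn n, (-1 : ℂ) ^ (∑ k, quadB A (v k)) = if Paired v then ((Bn n).card : ℂ) else 0 := by
  by_cases hv : Paired v
  · rw [if_pos hv]
    replace hv := (paired_iff_sum_mul_eq_zero v).1 hv
    have hterm : ∀ A, (-1 : ℂ) ^ (∑ k, quadB A (v k)) = 1 := fun A => by
      rw [neg_one_pow_eq_of_natCast_eq (m' := 0) (by rw [natCast_sum_quadB]; simp [hv]), pow_zero]
    simp [hterm]
  · rw [if_neg hv]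
    rw [paired_iff_sum_mul_eq_zero] at hv
    push Not at hv
    obtain ⟨i, j, hij⟩ := hv
    have hsymm : ∑ k, bitsToZMod (v k) j * bitsToZMod (v k) i =
        ∑ k, bitsToZMod (v k) i * bitsToZMod (v k) j := sum_congr rfl fun k _ => mul_comm _ _
    rcases le_total i j with h | h
    · exact sum_Bn_neg_one_pow_eq_zero (natCast_sum_quadB · v) h (zmod_two_eq_one_of_ne_zero hij)
    · exact sum_Bn_neg_one_pow_eq_zero (natCast_sum_quadB · v) h (zmod_two_eq_one_of_ne_zero (hsymm ▸ hij))

lemma outer_phiReq_apply {n : ℕ} (A : Matrix (Fin n) (Fin n) (Fin 2)) (x y : Bits n) :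
    outer (phiReq A) x y = (-1 : ℂ) ^ (quadB A x + quadB A y) / 2 ^ n := by
  have hsq : ((Real.sqrt (2 ^ n) : ℝ) : ℂ) * (Real.sqrt (2 ^ n) : ℝ) = 2 ^ n := by
    rw [← Complex.ofReal_mul, Real.mul_self_sqrt (by positivity)]; push_cast; ring
  simp only [outer, phiReq, of_apply, map_div₀, map_pow, map_neg, map_one, Complex.conj_ofReal]
  rw [div_mul_div_comm, hsq, pow_add]

lemma kron3_outer_phiReq_apply {n : ℕ} (A : Matrix (Fin n) (Fin n) (Fin 2))
    (x y z w s t : Bits n) :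
    kron3 (outer (phiReq A)) (x, y, z) (w, s, t) =
      (-1 : ℂ) ^ (∑ k, quadB A (![x, y, z, w, s, t] k)) / 8 ^ n := by
  have h8 : (8 : ℂ) ^ n = 2 ^ n * 2 ^ n * 2 ^ n := by rw [← mul_pow, ← mul_pow]; norm_num
  simp only [kron3, of_apply, outer_phiReq_apply, div_mul_div_comm, ← pow_add, h8,
    Fin.sum_univ_six]
  congr 2
  simp only [cons_val_zero, cons_val_one, Matrix.cons_val]
  ring

lemma sum_filter_single_apply {α : Type*} [Fintype α] [DecidableEq α]
    (p : (Fin 6 → α) → Prop) [DecidablePred p] (x y z w s t : α) :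
    (∑ v ∈ univ.filter p, Matrix.single (v 0, v 1, v 2) (v 3, v 4, v 5) (1 : ℂ)) (x, y, z) (w, s, t)
      = if p ![x, y, z, w, s, t] then 1 else 0 := by
  have key : ∀ v : Fin 6 → α,
      ((v 0, v 1, v 2) = (x, y, z) ∧ (v 3, v 4, v 5) = (w, s, t)) ↔ v = ![x, y, z, w, s, t] := by
    intro v
    simp [funext_iff, Fin.forall_fin_succ, and_assoc]
  simp only [Matrix.sum_apply, Matrix.single_apply, key, sum_ite_eq', mem_filter, mem_univ,
    true_and]

theorem respovm_third_moment_general (n : ℕ) :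
    (((Bn n).card : ℂ))⁻¹ • ∑ A ∈ Bn n, kron3 (outer (phiReq A)) =
      ((8 : ℂ) ^ n)⁻¹ •
        ∑ v ∈ Finset.univ.filter (fun v : Fin 6 → Bits n => Paired v),
          Matrix.single (v 0, v 1, v 2) (v 3, v 4, v 5) (1 : ℂ) := by
  ext ⟨x, y, z⟩ ⟨w, s, t⟩
  have hB : ((Bn n).card : ℂ) ≠ 0 := by
    exact_mod_cast (Finset.card_pos.2 ⟨0, by simp [Bn]⟩).ne'
  rw [Matrix.smul_apply, Matrix.smul_apply, sum_filter_single_apply, Matrix.sum_apply]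
  simp only [kron3_outer_phiReq_apply, ← sum_div, sum_Bn_neg_one_pow_sum_quadB, smul_eq_mul]
  split_ifs
  · field_simp
  · simp

/-- third moment of the real equatorial stabilizer ensemble,
expressed via the set `𝒦₁` of paired 6-tuples of bit strings. -/
theorem respovm_third_moment (n : ℕ) (hn : 1 ≤ n) :
    (((Bn n).card : ℂ))⁻¹ • ∑ A ∈ Bn n, kron3 (outer (phiReq A)) =
      ((8 : ℂ) ^ n)⁻¹ •
        ∑ v ∈ Finset.univ.filter (fun v : Fin 6 → Bits n => Paired v),
          Matrix.single (v 0, v 1, v 2) (v 3, v 4, v 5) (1 : ℂ) :=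
  respovm_third_moment_general n
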